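/- For two row-strict composition tableaux Υ, Ω of the same shape α, Ω < Υ in the recursive total order if and only if x^Ω < x^Υ in lexicographic order on monomials, where x^Υ is the monomial with exponent vector equal to the inversion vector of Υ. -/

import Mathlib

open Finset

/-- The content interval `[n-m+1, n]` of a shifted tableau. -/
def content (n m : ℕ) : Finset ℕ := Finset.Icc (n - m + 1) n

lemma content_mono (n m : ℕ) : content n (m - 1) ⊆ content n m := by
  intro x hx
  simp only [content, Finset.mem_Icc] at *
  omega

/-- A (shifted) row-strict composition tableau of shape `β` (a weak composition of `m` with
`k` parts) and content `[n-m+1, n]`, encoded by the assignment of each entry to its row.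
(The filling of each row is determined by its set of entries, since entries strictly decrease
from left to right in each row.) -/
abbrev RSCT (n m k : ℕ) (β : Fin k → ℕ) : Type :=
  {row : {i : ℕ // i ∈ content n m} → Fin k //
    ∀ j : Fin k, (Finset.univ.filter fun i => row i = j).card = β j}

/-- The (0-indexed) column of entry `i`: the number of larger entries in its own row. -/
def colOf {n m k : ℕ} {β : Fin k → ℕ} (T : RSCT n m k β)
    (i : {a : ℕ // a ∈ content n m}) : ℕ :=
  (Finset.univ.filter fun i' : {a : ℕ // a ∈ content n m} =>
    T.val i' = T.val i ∧ (i : ℕ) < (i' : ℕ)).card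

/-- `(i, j)` is a Springer inversion of `T`: there is an entry `i' > i` in row `j` that is
either directly above `i` in the same column, or in a column strictly to the right of the
column of `i`. -/
def isInv {n m k : ℕ} {β : Fin k → ℕ} (T : RSCT n m k β) (i : ℕ) (j : Fin k) : Prop :=
  ∃ (hi : i ∈ content n m) (i' : {a : ℕ // a ∈ content n m}),
    T.val i' = j ∧ i < (i' : ℕ) ∧
      (colOf T ⟨i, hi⟩ < colOf T i' ∨
        (colOf T i' = colOf T ⟨i, hi⟩ ∧ j < T.val ⟨i, hi⟩))

/-- The finite set of Springer inversions of `T`. -/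
noncomputable def InvF {n m k : ℕ} {β : Fin k → ℕ} (T : RSCT n m k β) :
    Finset (ℕ × Fin k) :=
  @Finset.filter (ℕ × Fin k) (fun p => isInv T p.1 p.2) (Classical.decPred _)
    ((content n m) ×ˢ (Finset.univ : Finset (Fin k)))

/-- The inversion vector of `T`: `invVec T i` is the number of Springer inversions of `T`
with first coordinate `i`. -/
noncomputable def invVec {n m k : ℕ} {β : Fin k → ℕ} (T : RSCT n m k β) (i : ℕ) : ℕ :=
  ((InvF T).filter fun p => p.1 = i).card

/-- `etaRel T T'` expresses that `T'` is obtained from `T` by removing the box containing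
the minimal entry `n - m + 1` (which lies at the end of its row). -/
def etaRel {n m k : ℕ} {β β' : Fin k → ℕ} (T : RSCT n m k β)
    (T' : RSCT n (m - 1) k β') : Prop :=
  (∃ h : n - m + 1 ∈ content n m,
      β' = Function.update β (T.val ⟨n - m + 1, h⟩) (β (T.val ⟨n - m + 1, h⟩) - 1)) ∧
  ∀ (i : ℕ) (hi : i ∈ content n (m - 1)),
      T'.val ⟨i, hi⟩ = T.val ⟨i, content_mono n m hi⟩
/-- The specification of the recursive total order on row-strict composition tableaux:
if the minimal entries lie in different rows, compare via Springer inversions; if they lie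
in the same row, compare the tableaux obtained by removing the minimal entry; the relation
is empty on empty tableaux. -/
def OrderSpec (n k : ℕ)
    (R : ∀ (m : ℕ) (β : Fin k → ℕ), RSCT n m k β → RSCT n m k β → Prop) : Prop :=
  (∀ (β : Fin k → ℕ) (T T' : RSCT n 0 k β), ¬ R 0 β T T') ∧
  (∀ (m : ℕ) (β : Fin k → ℕ) (Υ Ω : RSCT n m k β) (h : n - m + 1 ∈ content n m),
      Υ.val ⟨n - m + 1, h⟩ ≠ Ω.val ⟨n - m + 1, h⟩ →
      (R m β Ω Υ ↔ isInv Υ (n - m + 1) (Ω.val ⟨n - m + 1, h⟩))) ∧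
  (∀ (m : ℕ) (β : Fin k → ℕ) (Υ Ω : RSCT n m k β) (h : n - m + 1 ∈ content n m),
      Υ.val ⟨n - m + 1, h⟩ = Ω.val ⟨n - m + 1, h⟩ →
      ∀ (β' : Fin k → ℕ) (Υ' Ω' : RSCT n (m - 1) k β'),
        etaRel Υ Υ' → etaRel Ω Ω' → (R m β Ω Υ ↔ R (m - 1) β' Ω' Υ'))

/-- The equivariant Springer monomial `P_Υ(z, x) = ∏_{(i,j) ∈ Inv(Υ)} (x_i − z_j)`,
with `x`-variables indexed by `Sum.inl` and `z`-variables by `Sum.inr`. -/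
noncomputable def Ppoly {n m k : ℕ} {β : Fin k → ℕ} (T : RSCT n m k β) :
    MvPolynomial (ℕ ⊕ Fin k) ℂ :=
  ∏ p ∈ InvF T, (MvPolynomial.X (Sum.inl p.1) - MvPolynomial.X (Sum.inr p.2))

/-- The localization map `φ_{w_Ω}`, substituting `x_i ↦ z_{r(i,Ω)}` where `r(i,Ω)` is the
row of `Ω` containing `i`, and fixing the `z`-variables. -/
noncomputable def loc {n m k : ℕ} {β : Fin k → ℕ} (Ω : RSCT n m k β) :
    MvPolynomial (ℕ ⊕ Fin k) ℂ →ₐ[ℂ] MvPolynomial (Fin k) ℂ :=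
  MvPolynomial.aeval fun v => match v with
    | Sum.inl i => if h : i ∈ content n m then MvPolynomial.X (Ω.val ⟨i, h⟩) else 0
    | Sum.inr j => MvPolynomial.X j

/-- Evaluation of all `z`-variables at `0`. -/
noncomputable def evz (k : ℕ) : MvPolynomial (ℕ ⊕ Fin k) ℂ →ₐ[ℂ] MvPolynomial ℕ ℂ :=
  MvPolynomial.aeval fun v => match v with
    | Sum.inl i => MvPolynomial.X i
    | Sum.inr _ => 0

/-- The Lehmer code of a permutation: `pcode w k = #{j > k : w j < w k}`. -/
def pcode {n : ℕ} (w : Equiv.Perm (Fin n)) (i : Fin n) : ℕ :=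
  (Finset.univ.filter fun j => i < j ∧ w j < w i).card

/-- The Coxeter length of a permutation: its number of inversions. -/
def plen {n : ℕ} (w : Equiv.Perm (Fin n)) : ℕ :=
  (Finset.univ.filter fun p : Fin n × Fin n => p.1 < p.2 ∧ w p.2 < w p.1).card


/-!
The minimal entry `μ = n - m + 1` sits at the end of its row `r`, so `(μ, j)` is an inversion
exactly when row `j` is longer than row `r`, or as long and above it. Hence the inversion
vector at `μ` is the rank of `r` in this strict total order on rows (`rowKey`), and it
determines `r`; all indices below `μ` carry no inversions. If the minimal entries of `Υ` and
`Ω` lie in different rows, the inversion vectors therefore first differ at `μ`, where the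
comparison is exactly the one prescribed for the order. If they lie in the same row, the
vectors agree at `μ`, and removing `μ` changes no other coordinate, so induction on `m`
applies.
-/

def LexLt (a b : ℕ → ℕ) : Prop := ∃ t, a t < b t ∧ ∀ s < t, a s = b s

lemma lexLt_iff_lt_of_eq_of_ne {a b : ℕ → ℕ} {t : ℕ} (heq : ∀ s < t, a s = b s)
    (hne : a t ≠ b t) : LexLt a b ↔ a t < b t := by
  refine ⟨fun ⟨t', hlt, hbelow⟩ => ?_, fun h => ⟨t, h, heq⟩⟩
  rcases lt_trichotomy t' t with h | rfl | h
  · exact absurd (heq t' h) hlt.ne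
  · exact hlt
  · exact absurd (hbelow t h) hne

lemma LexLt.of_forall {a b a' b' : ℕ → ℕ}
    (h : ∀ s, (a s = a' s ∧ b s = b' s) ∨ (a s = b s ∧ a' s = b' s)) (hab : LexLt a b) :
    LexLt a' b' := by
  obtain ⟨t, hlt, hbelow⟩ := hab
  refine ⟨t, ?_, fun s hs => ?_⟩
  · rcases h t with ⟨ha, hb⟩ | ⟨hab, -⟩
    · rwa [← ha, ← hb]
    · exact absurd hab hlt.ne
  · rcases h s with ⟨ha, hb⟩ | ⟨-, h'⟩
    · rw [← ha, ← hb, hbelow s hs]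
    · exact h'

lemma lexLt_congr {a b a' b' : ℕ → ℕ}
    (h : ∀ s, (a s = a' s ∧ b s = b' s) ∨ (a s = b s ∧ a' s = b' s)) :
    LexLt a b ↔ LexLt a' b' :=
  ⟨LexLt.of_forall h, LexLt.of_forall fun s =>
    (h s).imp (fun h => ⟨h.1.symm, h.2.symm⟩) fun h => ⟨h.2, h.1⟩⟩

lemma card_filter_lt_lt_card_filter_lt_iff {ι L : Type*} [Fintype ι] [LinearOrder L]
    {f : ι → L} {a b : ι} : #{i | f i < f a} < #{i | f i < f b} ↔ f a < f b := by
  constructor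
  · intro hcard
    by_contra! hba
    refine hcard.not_ge (card_le_card fun i hi => ?_)
    simp only [mem_filter, mem_univ, true_and] at hi ⊢
    exact hi.trans_le hba
  · intro hab
    refine card_lt_card ⟨fun i hi => ?_, fun hsub => ?_⟩
    · simp only [mem_filter, mem_univ, true_and] at hi ⊢
      exact hi.trans hab
    · simpa using hsub (mem_filter.mpr ⟨mem_univ a, hab⟩)

def rowKey {k : ℕ} (β : Fin k → ℕ) (j : Fin k) : ℕᵒᵈ ×ₗ Fin k :=
  toLex (OrderDual.toDual (β j), j)

lemma rowKey_lt_rowKey_iff {k : ℕ} {β : Fin k → ℕ} {i j : Fin k} :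
    rowKey β i < rowKey β j ↔ β j < β i ∨ β i = β j ∧ i < j :=
  Prod.Lex.toLex_lt_toLex

lemma rowKey_injective {k : ℕ} (β : Fin k → ℕ) : Function.Injective (rowKey β) :=
  fun _ _ h => congrArg Prod.snd (congrArg ofLex h)

section Tableau

variable {n m k : ℕ} {β : Fin k → ℕ}

open Classical in
lemma invVec_eq_card_isInv (T : RSCT n m k β) (i : ℕ) :
    invVec T i = #{j | isInv T i j} := by
  rw [invVec, eq_comm, ← card_map ⟨(i, ·), Prod.mk_right_injective i⟩]
  refine congrArg card (Finset.ext fun ⟨i', j⟩ => ?_)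
  simp only [InvF, mem_filter, mem_product, mem_map, mem_univ, true_and, and_true,
    Function.Embedding.coeFn_mk, Prod.mk.injEq]
  constructor
  · rintro ⟨j, hinv, rfl, rfl⟩
    exact ⟨⟨hinv.1, hinv⟩, rfl⟩
  · rintro ⟨⟨-, hinv⟩, rfl⟩
    exact ⟨j, hinv, rfl, rfl⟩

lemma invVec_eq_zero_of_notMem (T : RSCT n m k β) {i : ℕ} (hi : i ∉ content n m) :
    invVec T i = 0 := by
  classical
  rw [invVec_eq_card_isInv, card_eq_zero, filter_eq_empty_iff]
  exact fun _ _ hinv => hi hinv.1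

lemma colOf_lt_colOf (T : RSCT n m k β) {i₁ i₂ : {a : ℕ // a ∈ content n m}}
    (hrow : T.val i₁ = T.val i₂) (hlt : (i₁ : ℕ) < i₂) : colOf T i₂ < colOf T i₁ := by
  classical
  refine card_lt_card ⟨fun i hi => ?_, fun hsub => ?_⟩
  · simp only [mem_filter, mem_univ, true_and] at hi ⊢
    exact ⟨hi.1.trans hrow.symm, hlt.trans hi.2⟩
  · simpa using hsub (mem_filter.mpr ⟨mem_univ i₂, hrow.symm, hlt⟩)

lemma colOf_lt (T : RSCT n m k β) (i : {a : ℕ // a ∈ content n m}) :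
    colOf T i < β (T.val i) := by
  classical
  rw [← T.2 (T.val i)]
  refine card_lt_card ⟨fun i' hi' => ?_, fun hsub => ?_⟩
  · simp only [mem_filter, mem_univ, true_and] at hi' ⊢
    exact hi'.1
  · simpa using hsub (mem_filter.mpr ⟨mem_univ i, rfl⟩)

lemma exists_colOf_eq (T : RSCT n m k β) (j : Fin k) {c : ℕ} (hc : c < β j) :
    ∃ i, T.val i = j ∧ colOf T i = c := by
  classical
  have hinj : ∀ i₁ i₂, T.val i₁ = j → T.val i₂ = j → colOf T i₁ = colOf T i₂ → i₁ = i₂ := by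
    intro i₁ i₂ h₁ h₂ hcol
    rcases lt_trichotomy (i₁ : ℕ) i₂ with hlt | heq | hlt
    · exact absurd hcol (colOf_lt_colOf T (h₁.trans h₂.symm) hlt).ne'
    · exact Subtype.ext heq
    · exact absurd hcol (colOf_lt_colOf T (h₂.trans h₁.symm) hlt).ne
  obtain ⟨i, hi, hic⟩ := surj_on_of_inj_on_of_card_le (s := {i | T.val i = j})
    (t := range (β j)) (fun i _ => colOf T i)
    (fun i hi => mem_range.mpr ((mem_filter.mp hi).2 ▸ colOf_lt T i))
    (fun i₁ i₂ h₁ h₂ => hinj i₁ i₂ (mem_filter.mp h₁).2 (mem_filter.mp h₂).2)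
    (by rw [card_range, T.2 j]) c (mem_range.mpr hc)
  exact ⟨i, (mem_filter.mp hi).2, hic.symm⟩

lemma min_mem_content (hm : 0 < m) (hmn : m ≤ n) : n - m + 1 ∈ content n m := by
  simp only [content, mem_Icc]; omega

lemma mem_content_pred_iff (hm : 0 < m) (hmn : m ≤ n) {a : ℕ} :
    a ∈ content n (m - 1) ↔ a ∈ content n m ∧ a ≠ n - m + 1 := by
  simp only [content, mem_Icc]; omega

lemma min_lt_of_ne {i : {a : ℕ // a ∈ content n m}} (h : n - m + 1 ∈ content n m)
    (hne : i ≠ ⟨n - m + 1, h⟩) : n - m + 1 < (i : ℕ) := by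
  have hle : n - m + 1 ≤ (i : ℕ) := (mem_Icc.mp i.2).1
  exact hle.lt_of_ne fun he => hne (Subtype.ext he.symm)

lemma colOf_min (T : RSCT n m k β) (h : n - m + 1 ∈ content n m) :
    colOf T ⟨n - m + 1, h⟩ = β (T.val ⟨n - m + 1, h⟩) - 1 := by
  classical
  rw [colOf, ← T.2, ← card_erase_of_mem (s := {i | T.val i = T.val ⟨n - m + 1, h⟩})
    (mem_filter.mpr ⟨mem_univ _, rfl⟩)]
  congr 1
  ext i
  simp only [mem_filter, mem_univ, true_and, mem_erase]
  exact ⟨fun ⟨hrow, hlt⟩ => ⟨fun he => by simp [he] at hlt, hrow⟩,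
    fun ⟨hne, hrow⟩ => ⟨hrow, min_lt_of_ne h hne⟩⟩

lemma isInv_min_iff (T : RSCT n m k β) (h : n - m + 1 ∈ content n m) (j : Fin k) :
    isInv T (n - m + 1) j ↔ rowKey β j < rowKey β (T.val ⟨n - m + 1, h⟩) := by
  set r := T.val ⟨n - m + 1, h⟩
  have hcol : colOf T ⟨n - m + 1, h⟩ = β r - 1 := colOf_min T h
  have hr : 0 < β r := (Nat.zero_le _).trans_lt (colOf_lt T ⟨n - m + 1, h⟩)
  rw [rowKey_lt_rowKey_iff]
  constructor
  · rintro ⟨_, i', rfl, -, hcase⟩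
    have hi' := colOf_lt T i'
    rw [hcol] at hcase
    omega
  · intro hjr
    have hne : j ≠ r := by rintro rfl; omega
    obtain ⟨i', hrow, hcol'⟩ :=
      exists_colOf_eq T j (c := if β r < β j then β r else β r - 1) (by split_ifs <;> omega)
    have hi' : n - m + 1 < (i' : ℕ) := min_lt_of_ne h fun he => hne (by rw [← hrow, he])
    refine ⟨h, i', hrow, hi', ?_⟩
    rw [hcol, hcol']
    split_ifs at * <;> omega

lemma invVec_min (T : RSCT n m k β) (h : n - m + 1 ∈ content n m) :
    invVec T (n - m + 1) = #{j | rowKey β j < rowKey β (T.val ⟨n - m + 1, h⟩)} := by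
  classical
  rw [invVec_eq_card_isInv]
  simp only [isInv_min_iff T h]

lemma invVec_min_lt_invVec_min_iff (T U : RSCT n m k β) (h : n - m + 1 ∈ content n m) :
    invVec T (n - m + 1) < invVec U (n - m + 1) ↔
      rowKey β (T.val ⟨n - m + 1, h⟩) < rowKey β (U.val ⟨n - m + 1, h⟩) := by
  rw [invVec_min T h, invVec_min U h]
  exact card_filter_lt_lt_card_filter_lt_iff

def contentPredEmb (n m : ℕ) : {a // a ∈ content n (m - 1)} ↪ {a // a ∈ content n m} :=
  Subtype.impEmbedding _ _ (content_mono n m)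

lemma map_univ_contentPredEmb (hm : 0 < m) (hmn : m ≤ n) :
    univ.map (contentPredEmb n m) = univ.erase ⟨n - m + 1, min_mem_content hm hmn⟩ := by
  ext ⟨a, ha⟩
  simp only [mem_map, mem_univ, true_and, mem_erase, ne_eq, Subtype.mk.injEq, and_true]
  have hpred : a ∈ content n (m - 1) ↔ a ≠ n - m + 1 :=
    (mem_content_pred_iff hm hmn).trans (and_iff_right ha)
  refine ⟨fun ⟨b, hb⟩ => hpred.mp ?_, fun hne => ⟨⟨a, hpred.mpr hne⟩, rfl⟩⟩
  have hba : b.1 = a := congrArg Subtype.val hb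
  exact hba ▸ b.2

lemma card_filter_comp_contentPredEmb (hm : 0 < m) (hmn : m ≤ n)
    (p : {a // a ∈ content n m} → Prop) [DecidablePred p] :
    #{i | p (contentPredEmb n m i)} =
      #((univ.filter p).erase ⟨n - m + 1, min_mem_content hm hmn⟩) := by
  rw [← card_map (contentPredEmb n m), ← filter_erase, ← map_univ_contentPredEmb hm hmn,
    filter_map]
  rfl

def minRow (hm : 0 < m) (hmn : m ≤ n) (T : RSCT n m k β) : Fin k :=
  T.val ⟨n - m + 1, min_mem_content hm hmn⟩

def removeMin (hm : 0 < m) (hmn : m ≤ n) (T : RSCT n m k β) {β' : Fin k → ℕ}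
    (hβ' : β' = Function.update β (minRow hm hmn T) (β (minRow hm hmn T) - 1)) :
    RSCT n (m - 1) k β' := by
  classical
  refine ⟨T.val ∘ contentPredEmb n m, fun j => ?_⟩
  refine (card_filter_comp_contentPredEmb hm hmn (T.val · = j)).trans ?_
  rw [card_erase_eq_ite, T.2 j, hβ', Function.update_apply]
  simp only [mem_filter, mem_univ, true_and, minRow, eq_comm (a := j)]
  split_ifs with hr
  · rw [hr]
  · rfl

variable {hm : 0 < m} {hmn : m ≤ n} {β' : Fin k → ℕ} (T : RSCT n m k β)
  (hβ' : β' = Function.update β (minRow hm hmn T) (β (minRow hm hmn T) - 1))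

lemma etaRel_removeMin : etaRel T (removeMin hm hmn T hβ') :=
  ⟨⟨_, hβ'⟩, fun _ _ => rfl⟩

lemma colOf_removeMin (i : {a // a ∈ content n (m - 1)}) :
    colOf (removeMin hm hmn T hβ') i = colOf T (contentPredEmb n m i) := by
  classical
  refine (card_filter_comp_contentPredEmb hm hmn
    (fun i' => T.val i' = T.val (contentPredEmb n m i) ∧ (i : ℕ) < i')).trans ?_
  refine congrArg card (erase_eq_of_notMem fun hmin => ?_)
  have hle : n - m + 1 ≤ (i : ℕ) := (mem_Icc.mp (contentPredEmb n m i).2).1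
  exact absurd (mem_filter.mp hmin).2.2 hle.not_gt

lemma isInv_removeMin {i : ℕ} (hi : i ≠ n - m + 1) (j : Fin k) :
    isInv (removeMin hm hmn T hβ') i j ↔ isInv T i j := by
  constructor
  · rintro ⟨hi', i', hrow, hlt, hcase⟩
    refine ⟨content_mono n m hi', contentPredEmb n m i', hrow, hlt, ?_⟩
    rwa [colOf_removeMin, colOf_removeMin] at hcase
  · rintro ⟨hi', i', hrow, hlt, hcase⟩
    have hi'' : (i' : ℕ) ∈ content n (m - 1) :=
      (mem_content_pred_iff hm hmn).mpr ⟨i'.2, (hlt.trans_le' (mem_Icc.mp hi').1).ne'⟩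
    refine ⟨(mem_content_pred_iff hm hmn).mpr ⟨hi', hi⟩, ⟨i', hi''⟩, hrow, hlt, ?_⟩
    rw [colOf_removeMin, colOf_removeMin]
    exact hcase

lemma invVec_removeMin {s : ℕ} (hs : s ≠ n - m + 1) :
    invVec (removeMin hm hmn T hβ') s = invVec T s := by
  classical
  simp only [invVec_eq_card_isInv, isInv_removeMin T hβ' hs]

end Tableau

namespace OrderSpec

variable {n k : ℕ} {R : ∀ (m : ℕ) (β : Fin k → ℕ), RSCT n m k β → RSCT n m k β → Prop}
  {m : ℕ} {β : Fin k → ℕ}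

lemma iff_lexLt_of_min_row_ne (hR : OrderSpec n k R) (Υ Ω : RSCT n m k β)
    (h : n - m + 1 ∈ content n m) (hne : Υ.val ⟨n - m + 1, h⟩ ≠ Ω.val ⟨n - m + 1, h⟩) :
    R m β Ω Υ ↔ LexLt (invVec Ω) (invVec Υ) := by
  have hbelow : ∀ s < n - m + 1, invVec Ω s = invVec Υ s := fun s hs => by
    have hs' : s ∉ content n m := by simp only [content, mem_Icc]; omega
    rw [invVec_eq_zero_of_notMem Ω hs', invVec_eq_zero_of_notMem Υ hs']
  have hmin : invVec Ω (n - m + 1) ≠ invVec Υ (n - m + 1) := by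
    intro heq
    rcases ((rowKey_injective β).ne hne).lt_or_gt with hlt | hlt
    · exact heq.not_gt ((invVec_min_lt_invVec_min_iff Υ Ω h).mpr hlt)
    · exact heq.not_lt ((invVec_min_lt_invVec_min_iff Ω Υ h).mpr hlt)
  rw [hR.2.1 m β Υ Ω h hne, isInv_min_iff Υ h, lexLt_iff_lt_of_eq_of_ne hbelow hmin,
    invVec_min_lt_invVec_min_iff Ω Υ h]

lemma iff_lexLt_of_min_row_eq (hR : OrderSpec n k R) (hm : 0 < m) (hmn : m ≤ n)
    (Υ Ω : RSCT n m k β)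
    (heq : minRow hm hmn Υ = minRow hm hmn Ω)
    (ih : ∀ (β' : Fin k → ℕ) (Υ' Ω' : RSCT n (m - 1) k β'),
      R (m - 1) β' Ω' Υ' ↔ LexLt (invVec Ω') (invVec Υ')) :
    R m β Ω Υ ↔ LexLt (invVec Ω) (invVec Υ) := by
  have hβ' : Function.update β (minRow hm hmn Υ) (β (minRow hm hmn Υ) - 1) =
      Function.update β (minRow hm hmn Ω) (β (minRow hm hmn Ω) - 1) := by rw [heq]
  set Υ' := removeMin hm hmn Υ rfl
  set Ω' := removeMin hm hmn Ω hβ'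
  rw [hR.2.2 m β Υ Ω _ heq _ Υ' Ω' (etaRel_removeMin Υ rfl) (etaRel_removeMin Ω hβ'), ih]
  refine lexLt_congr fun s => ?_
  rcases eq_or_ne s (n - m + 1) with rfl | hs
  · have hmin : n - m + 1 ∉ content n (m - 1) := by simp only [content, mem_Icc]; omega
    right
    rw [invVec_eq_zero_of_notMem Ω' hmin, invVec_eq_zero_of_notMem Υ' hmin,
      invVec_min Ω (min_mem_content hm hmn), invVec_min Υ (min_mem_content hm hmn)]
    unfold minRow at heq
    rw [heq]
    exact ⟨rfl, rfl⟩
  · exact Or.inl ⟨invVec_removeMin Ω hβ' hs, invVec_removeMin Υ rfl hs⟩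

theorem iff_lexLt (hR : OrderSpec n k R) (hmn : m ≤ n) (β : Fin k → ℕ) (Υ Ω : RSCT n m k β) :
    R m β Ω Υ ↔ LexLt (invVec Ω) (invVec Υ) := by
  induction m generalizing β with
  | zero =>
    refine iff_of_false (hR.1 β Ω Υ) fun ⟨t, hlt, _⟩ => hlt.ne ?_
    have ht : t ∉ content n 0 := by simp only [content, mem_Icc]; omega
    rw [invVec_eq_zero_of_notMem Ω ht, invVec_eq_zero_of_notMem Υ ht]
  | succ m ih =>
    have hm : 0 < m + 1 := m.succ_pos
    by_cases heq : minRow hm hmn Υ = minRow hm hmn Ω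
    · exact hR.iff_lexLt_of_min_row_eq hm hmn Υ Ω heq (ih (by omega))
    · exact hR.iff_lexLt_of_min_row_ne Υ Ω _ heq

end OrderSpec

theorem stmt16_general (n k : ℕ)
    (R : ∀ (m : ℕ) (β : Fin k → ℕ), RSCT n m k β → RSCT n m k β → Prop)
    (hR : OrderSpec n k R) (m : ℕ) (hmn : m ≤ n)
    (α : Fin k → ℕ)
    (Υ Ω : RSCT n m k α) :
    R m α Ω Υ ↔
      ∃ t : ℕ, invVec Ω t < invVec Υ t ∧ ∀ s : ℕ, s < t → invVec Ω s = invVec Υ s :=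
  hR.iff_lexLt hmn α Υ Ω

/-- For two row-strict composition tableaux `Υ, Ω` of the same strong
composition shape `α`, `Ω < Υ` in the recursive total order if and only if `x^Ω < x^Υ` in
lexicographic order on monomials, where `x^Υ` has exponent vector the inversion vector of
`Υ` (lex: smaller exponent at the first index where the exponent vectors differ). -/
theorem stmt16 (n k : ℕ)
    (R : ∀ (m : ℕ) (β : Fin k → ℕ), RSCT n m k β → RSCT n m k β → Prop)
    (hR : OrderSpec n k R) (m : ℕ) (hmn : m ≤ n)
    (α : Fin k → ℕ) (hpos : ∀ j, 0 < α j) (hsum : ∑ j, α j = m)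
    (Υ Ω : RSCT n m k α) :
    R m α Ω Υ ↔
      ∃ t : ℕ, invVec Ω t < invVec Υ t ∧ ∀ s : ℕ, s < t → invVec Ω s = invVec Υ s :=
  stmt16_general n k R hR m hmn α Υ Ω
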